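/- arXiv:1405.6770 — 2 statements merged into one kernel-verified Lean document; each statement's English description precedes it below -/
import Mathlib

section
/- Suppose that for every Hermitian idempotent P : Matrix n n ℂ with P ≠ 0 and P ≠ 1 one has P*Lᴴ*(1 - P)*L*P ≠ 0. Then every invariant state ρ is faithful, i.e. ρ is positive definite. -/
/-!
Let `P` be the support projection of an invariant state `ρ` and `Q = 1 - P`. Since `Qρ = ρQ = 0`,
compressing `𝓛(ρ) = 0` by `Q` leaves `Q L ρ Lᴴ Q = 0`; positivity of `ρ` turns this into
`Q L ρ = 0`, hence `Q L P = 0` and `P Lᴴ Q L P = (Q L P)ᴴ (Q L P) = 0`. As `P ≠ 0` (since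
`tr ρ = 1`), the hypothesis forces `P = 1`, i.e. `ρ` is invertible.
-/

open Matrix ComplexOrder

variable {n : Type*}

/-- The Heisenberg (Lindblad) generator
`𝓖(X) = -i·(X*H - H*X) + Lᴴ*X*L - (1/2)·(Lᴴ*L*X + X*Lᴴ*L)`. -/
noncomputable def heisGen [Fintype n] [DecidableEq n] (H L X : Matrix n n ℂ) : Matrix n n ℂ :=
  -Complex.I • (X * H - H * X) + Lᴴ * X * L - (1/2 : ℂ) • (Lᴴ * L * X + X * (Lᴴ * L))

/-- The Schrödinger (predual) generator
`𝓛(ρ) = -i·(H*ρ - ρ*H) + L*ρ*Lᴴ - (1/2)·(Lᴴ*L*ρ + ρ*Lᴴ*L)`. -/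
noncomputable def schrodGen [Fintype n] [DecidableEq n] (H L ρ : Matrix n n ℂ) : Matrix n n ℂ :=
  -Complex.I • (H * ρ - ρ * H) + L * ρ * Lᴴ - (1/2 : ℂ) • (Lᴴ * L * ρ + ρ * (Lᴴ * L))

namespace Matrix

variable {𝕜 : Type*} [RCLike 𝕜] [Fintype n] [DecidableEq n]

lemma cfc_mul_cfc (f g : ℝ → ℝ) (A : Matrix n n 𝕜) :
    cfc f A * cfc g A = cfc (fun x => f x * g x) A :=
  (cfc_mul f g A (A.finite_real_spectrum.continuousOn f)
    (A.finite_real_spectrum.continuousOn g)).symm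

/-- `x * x⁻¹` is the indicator of `x ≠ 0` (as `0⁻¹ = 0`), so for Hermitian `A` this is the
orthogonal projection onto the range of `A`. -/
noncomputable def supportProj (A : Matrix n n 𝕜) : Matrix n n 𝕜 :=
  cfc (fun x : ℝ => x * x⁻¹) A

lemma isHermitian_supportProj (A : Matrix n n 𝕜) : A.supportProj.IsHermitian :=
  cfc_predicate _ A

lemma supportProj_mul_self (A : Matrix n n 𝕜) :
    A.supportProj * A.supportProj = A.supportProj := by
  rw [supportProj, cfc_mul_cfc]
  refine cfc_congr fun x _ => ?_
  rcases eq_or_ne x 0 with rfl | hx <;> simp [*]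

lemma mul_cfc_inv_eq_supportProj {A : Matrix n n 𝕜} (hA : A.IsHermitian) :
    A * cfc (·⁻¹ : ℝ → ℝ) A = A.supportProj := by
  rw [supportProj, ← cfc_mul_cfc, cfc_id' ℝ A hA.isSelfAdjoint]

lemma mul_supportProj {A : Matrix n n 𝕜} (hA : A.IsHermitian) : A * A.supportProj = A :=
  calc A * A.supportProj = cfc (fun x : ℝ => x * (x * x⁻¹)) A := by
        rw [← cfc_mul_cfc (fun x => x), cfc_id' ℝ A hA.isSelfAdjoint, supportProj]
    _ = A := by
        simp_rw [← mul_assoc, mul_self_mul_inv]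
        exact cfc_id' ℝ A hA.isSelfAdjoint

lemma supportProj_mul {A : Matrix n n 𝕜} (hA : A.IsHermitian) : A.supportProj * A = A := by
  simpa [hA.eq, (isHermitian_supportProj A).eq] using congrArg conjTranspose (mul_supportProj hA)

lemma mul_supportProj_eq_zero {A X : Matrix n n 𝕜} (hA : A.IsHermitian) (hXA : X * A = 0) :
    X * A.supportProj = 0 := by
  rw [← mul_cfc_inv_eq_supportProj hA, ← Matrix.mul_assoc, hXA, Matrix.zero_mul]

lemma supportProj_ne_zero {A : Matrix n n 𝕜} (hA : A.IsHermitian) (h : A ≠ 0) :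
    A.supportProj ≠ 0 := fun hP => h (by rw [← mul_supportProj hA, hP, Matrix.mul_zero])

lemma isUnit_of_supportProj_eq_one {A : Matrix n n 𝕜} (hA : A.IsHermitian)
    (h : A.supportProj = 1) : IsUnit A :=
  IsUnit.of_mul_eq_one _ ((mul_cfc_inv_eq_supportProj hA).trans h)

open MatrixOrder in
lemma PosSemidef.mul_eq_zero_of_mul_mul_conjTranspose_eq_zero {m : Type*} {A : Matrix n n 𝕜}
    (hA : A.PosSemidef) {X : Matrix m n 𝕜} (h : X * A * Xᴴ = 0) : X * A = 0 := by
  obtain ⟨B, rfl⟩ := CStarAlgebra.nonneg_iff_eq_star_mul_self.mp hA.nonneg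
  rw [star_eq_conjTranspose, mul_conjTranspose_mul_self_eq_zero, ← self_mul_conjTranspose_eq_zero]
  simpa only [star_eq_conjTranspose, conjTranspose_mul, conjTranspose_conjTranspose,
    Matrix.mul_assoc] using h

end Matrix

lemma mul_schrodGen_mul_of_mul_eq_zero [Fintype n] [DecidableEq n] {H L ρ Q : Matrix n n ℂ}
    (hQρ : Q * ρ = 0) (hρQ : ρ * Q = 0) :
    Q * schrodGen H L ρ * Q = Q * L * ρ * Lᴴ * Q := by
  have hQρ' : ∀ X, Q * (ρ * X) = 0 := fun X => by rw [← Matrix.mul_assoc, hQρ, Matrix.zero_mul]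
  simp only [schrodGen, mul_add, add_mul, mul_sub, sub_mul, mul_smul_comm, smul_mul_assoc,
    Matrix.mul_assoc, hρQ, hQρ', Matrix.mul_zero, smul_zero, sub_zero, zero_add, add_zero]

lemma one_sub_supportProj_mul_mul_supportProj_eq_zero_of_schrodGen_eq_zero
    [Fintype n] [DecidableEq n] {H L ρ : Matrix n n ℂ} (hρ : ρ.PosSemidef)
    (hinv : schrodGen H L ρ = 0) :
    (1 - ρ.supportProj) * L * ρ.supportProj = 0 := by
  set Q := 1 - ρ.supportProj
  have hQH : Qᴴ = Q := by
    rw [conjTranspose_sub, conjTranspose_one, (isHermitian_supportProj ρ).eq]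
  have hQρ : Q * ρ = 0 := by rw [sub_mul, one_mul, supportProj_mul hρ.1, sub_self]
  have hρQ : ρ * Q = 0 := by rw [mul_sub, mul_one, mul_supportProj hρ.1, sub_self]
  have hsandwich : Q * L * ρ * (Q * L)ᴴ = 0 := by
    rw [conjTranspose_mul, hQH, ← Matrix.mul_assoc,
      ← mul_schrodGen_mul_of_mul_eq_zero hQρ hρQ, hinv, Matrix.mul_zero, Matrix.zero_mul]
  exact mul_supportProj_eq_zero hρ.1 (hρ.mul_eq_zero_of_mul_mul_conjTranspose_eq_zero hsandwich)

theorem invariant_state_faithful_general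
    [Fintype n] [DecidableEq n]
    (H L : Matrix n n ℂ)
    (hcond : ∀ P : Matrix n n ℂ, P.IsHermitian → P * P = P → P ≠ 0 → P ≠ 1 →
      P * Lᴴ * (1 - P) * L * P ≠ 0)
    (ρ : Matrix n n ℂ) (hρ : ρ.PosSemidef) (hρtr : ρ.trace = 1)
    (hinv : schrodGen H L ρ = 0) :
    ρ.PosDef := by
  set P := ρ.supportProj
  have hPH : P.IsHermitian := isHermitian_supportProj ρ
  have hPP : P * P = P := supportProj_mul_self ρ
  have hP0 : P ≠ 0 := supportProj_ne_zero hρ.1 (by rintro rfl; simp at hρtr)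
  rw [hρ.posDef_iff_isUnit]
  by_contra hunit
  refine hcond P hPH hPP hP0 (fun hP => hunit (isUnit_of_supportProj_eq_one hρ.1 hP)) ?_
  calc P * Lᴴ * (1 - P) * L * P = ((1 - P) * L * P)ᴴ * ((1 - P) * L * P) := by
        rw [conjTranspose_mul, conjTranspose_mul, conjTranspose_sub, conjTranspose_one, hPH.eq]
        simp only [Matrix.mul_assoc, ← Matrix.mul_assoc (1 - P) (1 - P),
          (IsIdempotentElem.one_sub hPP).eq]
    _ = 0 := by
        rw [one_sub_supportProj_mul_mul_supportProj_eq_zero_of_schrodGen_eq_zero hρ hinv,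
          Matrix.mul_zero]

/-- if `P*Lᴴ*(1-P)*L*P ≠ 0` for every non-trivial Hermitian idempotent `P`,
then every invariant state is faithful (positive definite). -/
theorem invariant_state_faithful
    [Fintype n] [DecidableEq n] [Nonempty n]
    (H L : Matrix n n ℂ) (hH : H.IsHermitian)
    (hcond : ∀ P : Matrix n n ℂ, P.IsHermitian → P * P = P → P ≠ 0 → P ≠ 1 →
      P * Lᴴ * (1 - P) * L * P ≠ 0)
    (ρ : Matrix n n ℂ) (hρ : ρ.PosSemidef) (hρtr : ρ.trace = 1)
    (hinv : schrodGen H L ρ = 0) :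
    ρ.PosDef :=
  invariant_state_faithful_general H L hcond ρ hρ hρtr hinv
end

section
/- Let ρ₀ be a state with trajectory ρ_t = exp(t·𝓛)(ρ₀), let (T_k) be a sequence of positive reals with T_k → ∞, and suppose the Cesàro averages (1/T_k)·∫₀^{T_k} ρ_t dt converge to a matrix σ as k → ∞. Then σ is an invariant state: σ is positive semidefinite, has trace 1, and 𝓛(σ) = 0. -/
open Matrix ComplexOrder

attribute [local instance] Matrix.linftyOpNormedAddCommGroup Matrix.linftyOpNormedSpace

variable {n : Type*}

/-- The Schrödinger (predual) generator
`𝓛(ρ) = -i·(H*ρ - ρ*H) + L*ρ*Lᴴ - (1/2)·(Lᴴ*L*ρ + ρ*Lᴴ*L)`, bundled as a linear map. -/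
noncomputable def schrodGenLM [Fintype n] [DecidableEq n] (H L : Matrix n n ℂ) :
    Matrix n n ℂ →ₗ[ℂ] Matrix n n ℂ :=
  -Complex.I • (LinearMap.mulLeft ℂ H - LinearMap.mulRight ℂ H)
    + (LinearMap.mulRight ℂ Lᴴ).comp (LinearMap.mulLeft ℂ L)
    - (1/2 : ℂ) • (LinearMap.mulLeft ℂ (Lᴴ * L) + LinearMap.mulRight ℂ (Lᴴ * L))

lemma schrodGenLM_apply [Fintype n] [DecidableEq n] (H L ρ : Matrix n n ℂ) :
    schrodGenLM H L ρ =
      -Complex.I • (H * ρ - ρ * H) + L * ρ * Lᴴ - (1/2 : ℂ) • (Lᴴ * L * ρ + ρ * (Lᴴ * L)) := by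
  simp [schrodGenLM, LinearMap.mulLeft, LinearMap.mulRight, mul_assoc]

/-- The trajectory `ρ_t = exp (t • 𝓛) ρ₀`, where `𝓛` is regarded as a continuous linear
endomorphism of `Matrix n n ℂ`. -/
noncomputable def traj [Fintype n] [DecidableEq n] (H L ρ₀ : Matrix n n ℂ) (t : ℝ) :
    Matrix n n ℂ :=
  haveI : IsTopologicalRing (Matrix n n ℂ →L[ℂ] Matrix n n ℂ) :=
    @NonUnitalSeminormedRing.toIsTopologicalRing _
      ContinuousLinearMap.toNormedRing.toNonUnitalNormedRing.toNonUnitalSeminormedRing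
  NormedSpace.exp (t • (LinearMap.toContinuousLinearMap (schrodGenLM H L))) ρ₀

/-!
Write `𝓛 = 𝓐 + 𝓑` with `𝓐 ρ = G ρ + ρ Gᴴ`, `G = -i H - ½ Lᴴ L`, and `𝓑 ρ = L ρ Lᴴ`. Both
`exp (t 𝓐) ρ = e^{tG} ρ (e^{tG})ᴴ` and `1 + t 𝓑` preserve positive semidefiniteness, hence so does
`exp (t 𝓛) = lim (exp (t 𝓐 / N) (1 + t 𝓑 / N)) ^ N`; since `trace ∘ 𝓛 = 0` it also preserves the
trace. So the trajectory stays in the closed convex set of states, and so do its Cesàro averages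
and their limit `σ`. Finally `𝓛` maps the average over `[0, T]` to `(ρ_T - ρ₀) / T`, which tends
to `0` because the set of states is bounded.
-/

open NormedSpace Filter Topology Asymptotics MeasureTheory

section ProductFormula

variable {A : Type*} [NormedRing A]

theorem norm_exp_le_exp_norm [NormOneClass A] [NormedAlgebra ℝ A] (x : A) :
    ‖exp x‖ ≤ Real.exp ‖x‖ := by
  rw [exp_eq_tsum ℝ, Real.exp_eq_exp_ℝ, exp_eq_tsum ℝ]
  refine (norm_tsum_le_tsum_norm (norm_expSeries_summable' x)).trans ?_
  refine Summable.tsum_le_tsum (fun n => ?_) (norm_expSeries_summable' x)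
    (expSeries_summable' (𝕂 := ℝ) ‖x‖)
  rw [norm_smul, smul_eq_mul, Real.norm_of_nonneg (by positivity)]
  exact mul_le_mul_of_nonneg_left (norm_pow_le x n) (by positivity)

theorem norm_pow_sub_pow_le [NormOneClass A] {x y : A} {M : ℝ} (hx : ‖x‖ ≤ M) (hy : ‖y‖ ≤ M) :
    ∀ N : ℕ, ‖x ^ N - y ^ N‖ ≤ N * M ^ (N - 1) * ‖x - y‖
  | 0 => by simp
  | N + 1 => by
    have hM : 0 ≤ M := (norm_nonneg x).trans hx
    have hyN : ‖y ^ N‖ ≤ M ^ N :=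
      (norm_pow_le y N).trans (pow_le_pow_left₀ (norm_nonneg y) hy N)
    calc ‖x ^ (N + 1) - y ^ (N + 1)‖ = ‖x * (x ^ N - y ^ N) + (x - y) * y ^ N‖ := by
          rw [pow_succ' x, pow_succ' y]; noncomm_ring
      _ ≤ M * (N * M ^ (N - 1) * ‖x - y‖) + ‖x - y‖ * M ^ N := by
          refine (norm_add_le _ _).trans (add_le_add ?_ ?_)
          · exact (norm_mul_le _ _).trans
              (mul_le_mul hx (norm_pow_sub_pow_le hx hy N) (norm_nonneg _) hM)
          · exact (norm_mul_le _ _).trans (mul_le_mul_of_nonneg_left hyN (norm_nonneg _))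
      _ = (N + 1 : ℕ) * M ^ (N + 1 - 1) * ‖x - y‖ := by
          rcases N with _ | N
          · simp
          · push_cast [Nat.add_sub_cancel]; ring

variable [NormedAlgebra ℝ A]

theorem norm_exp_smul_mul_one_add_smul_le [NormOneClass A] (a b : A) (h : ℝ) :
    ‖exp (h • a) * (1 + h • b)‖ ≤ Real.exp (|h| * (‖a‖ + ‖b‖)) :=
  calc _ ≤ ‖exp (h • a)‖ * ‖1 + h • b‖ := norm_mul_le _ _
    _ ≤ Real.exp (|h| * ‖a‖) * Real.exp (|h| * ‖b‖) := by
      gcongr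
      · simpa [norm_smul] using norm_exp_le_exp_norm (h • a)
      · refine (norm_add_le _ _).trans ?_
        simpa [norm_smul, add_comm] using Real.add_one_le_exp (|h| * ‖b‖)
    _ = Real.exp (|h| * (‖a‖ + ‖b‖)) := by rw [← Real.exp_add, mul_add]

variable [CompleteSpace A]

theorem tendsto_nat_smul_exp_smul_add_sub_exp_smul_mul (a b : A) (t : ℝ) :
    Tendsto (fun N : ℕ => (N : ℝ) •
      (exp ((t / N) • (a + b)) - exp ((t / N) • a) * (1 + (t / N) • b))) atTop (𝓝 0) := by
  -- the function vanishes at `0`, and so does its derivative `(a + b) - (a + b)`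
  have hf_isLittleO : (fun h : ℝ => exp (h • (a + b)) - exp (h • a) * (1 + h • b))
      =o[𝓝 0] fun h => h := by
    have hX := hasDerivAt_exp_smul_const' (𝕂 := ℝ) (a + b) 0
    have hY := (hasDerivAt_exp_smul_const' (𝕂 := ℝ) a 0).mul
      (((hasDerivAt_id (0 : ℝ)).smul_const b).const_add 1)
    simpa using (hX.sub hY).isLittleO
  have h := (hf_isLittleO.tendsto_inv_smul_nhds_zero.comp
    (tendsto_const_div_atTop_nhds_zero_nat t)).const_smul t
  rw [smul_zero] at h
  refine h.congr fun N => ?_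
  rcases eq_or_ne t 0 with rfl | ht
  · simp
  rcases eq_or_ne N 0 with rfl | hN
  · simp
  simp only [Function.comp_apply, smul_smul]
  field_simp

theorem tendsto_exp_smul_mul_one_add_smul_pow [NormOneClass A] (a b : A) (t : ℝ) :
    Tendsto (fun N : ℕ => (exp ((t / N) • a) * (1 + (t / N) • b)) ^ N) atTop
      (𝓝 (exp (t • (a + b)))) := by
  let _ : NormedAlgebra ℚ A := NormedAlgebra.restrictScalars ℚ ℝ A
  set c := ‖a‖ + ‖b‖
  have hX (h : ℝ) : ‖exp (h • (a + b))‖ ≤ Real.exp (|h| * c) := by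
    refine (norm_exp_le_exp_norm _).trans (Real.exp_le_exp.2 ?_)
    rw [norm_smul, Real.norm_eq_abs]
    exact mul_le_mul_of_nonneg_left (norm_add_le a b) (abs_nonneg h)
  -- telescoping: `‖Yᴺ - Xᴺ‖ ≤ N Mᴺ⁻¹ ‖Y - X‖` with `Xᴺ = exp (t • (a + b))`
  have hdiff (N : ℕ) (hN : 0 < N) :
      ‖(exp ((t / N) • a) * (1 + (t / N) • b)) ^ N - exp (t • (a + b))‖ ≤ Real.exp (|t| * c) *
        ‖(N : ℝ) • (exp ((t / N) • (a + b)) - exp ((t / N) • a) * (1 + (t / N) • b))‖ := by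
    have hpow : exp ((t / N) • (a + b)) ^ N = exp (t • (a + b)) := by
      rw [← NormedSpace.exp_nsmul, ← Nat.cast_smul_eq_nsmul ℝ, smul_smul,
        mul_div_cancel₀ t (by positivity)]
    have hM : Real.exp (|t / N| * c) ^ (N - 1) ≤ Real.exp (|t| * c) := by
      rw [← Real.exp_nat_mul, Real.exp_le_exp]
      calc ((N - 1 : ℕ) : ℝ) * (|t / N| * c) ≤ N * (|t / N| * c) := by
            gcongr; exact_mod_cast Nat.sub_le N 1
        _ = |t| * c := by rw [abs_div, Nat.abs_cast]; field_simp
    rw [norm_sub_rev, ← hpow]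
    refine (norm_pow_sub_pow_le (hX _) (norm_exp_smul_mul_one_add_smul_le a b _) N).trans ?_
    rw [norm_smul, Real.norm_natCast, mul_comm (N : ℝ), mul_assoc]
    gcongr
  rw [tendsto_iff_norm_sub_tendsto_zero]
  refine squeeze_zero' (.of_forall fun N => norm_nonneg _)
    ((eventually_gt_atTop 0).mono hdiff) ?_
  simpa using (tendsto_norm_zero.comp
    (tendsto_nat_smul_exp_smul_add_sub_exp_smul_mul a b t)).const_mul (Real.exp (|t| * c))

theorem exp_smul_add_mem_of_isClosed [NormOneClass A] {S : Submonoid A}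
    (hS : IsClosed (S : Set A)) {a b : A}
    (ha : ∀ t : ℝ, 0 ≤ t → exp (t • a) ∈ S) (hb : ∀ t : ℝ, 0 ≤ t → 1 + t • b ∈ S)
    {t : ℝ} (ht : 0 ≤ t) : exp (t • (a + b)) ∈ S :=
  hS.mem_of_tendsto (tendsto_exp_smul_mul_one_add_smul_pow a b t) <| .of_forall fun N =>
    S.pow_mem (S.mul_mem (ha _ (by positivity)) (hb _ (by positivity))) N

end ProductFormula

namespace ContinuousLinearMap

variable (𝕜 R : Type*) [RCLike 𝕜] [NormedRing R] [NormedAlgebra 𝕜 R]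

noncomputable def mulRingHom : R →+* (R →L[𝕜] R) where
  toFun := mul 𝕜 R
  map_one' := by ext; simp
  map_mul' x y := by ext; simp [mul_assoc]
  map_zero' := by simp
  map_add' := by simp

noncomputable def mulOpRingHom : Rᵐᵒᵖ →+* (R →L[𝕜] R) where
  toFun y := (mul 𝕜 R).flip y.unop
  map_one' := by ext; simp
  map_mul' x y := by ext; simp [mul_assoc]
  map_zero' := by simp
  map_add' := by simp

variable {𝕜 R} [CompleteSpace R]

theorem exp_mul (x : R) : exp (mul 𝕜 R x) = mul 𝕜 R (exp x) := by
  let _ : NormedAlgebra ℚ R := NormedAlgebra.restrictScalars ℚ 𝕜 R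
  let _ : NormedAlgebra ℚ (R →L[𝕜] R) := NormedAlgebra.restrictScalars ℚ 𝕜 _
  exact (map_exp (mulRingHom 𝕜 R) (mul 𝕜 R).continuous x).symm

theorem exp_flip_mul (x : R) : exp ((mul 𝕜 R).flip x) = (mul 𝕜 R).flip (exp x) := by
  let _ : NormedAlgebra ℚ R := NormedAlgebra.restrictScalars ℚ 𝕜 R
  let _ : NormedAlgebra ℚ (R →L[𝕜] R) := NormedAlgebra.restrictScalars ℚ 𝕜 _
  have h := map_exp (mulOpRingHom 𝕜 R)
    ((mul 𝕜 R).flip.continuous.comp MulOpposite.continuous_unop) (MulOpposite.op x)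
  rw [exp_op] at h
  exact h.symm

end ContinuousLinearMap

section Orbit

variable {E : Type*} [NormedAddCommGroup E] [NormedSpace ℂ E]

theorem one_add_real_smul_apply (Φ : E →L[ℂ] E) (t : ℝ) (x : E) :
    (1 + t • Φ) x = x + (t : ℂ) • Φ x :=
  rfl

variable [CompleteSpace E] (C : E →L[ℂ] E) (x : E)

theorem hasDerivAt_exp_smul_apply (t : ℝ) :
    HasDerivAt (fun s : ℝ => exp (s • C) x) (C (exp (t • C) x)) t :=
  ((ContinuousLinearMap.apply ℂ E x).restrictScalars ℝ).hasFDerivAt.comp_hasDerivAt t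
    (hasDerivAt_exp_smul_const' (𝕂 := ℝ) C t)

theorem continuous_exp_smul_apply : Continuous fun t : ℝ => exp (t • C) x :=
  continuous_iff_continuousAt.2 fun t => (hasDerivAt_exp_smul_apply C x t).continuousAt

theorem apply_intervalIntegral_exp_smul_apply (T : ℝ) :
    C (∫ t in (0 : ℝ)..T, exp (t • C) x) = exp (T • C) x - x := by
  rw [← C.intervalIntegral_comp_comm ((continuous_exp_smul_apply C x).intervalIntegrable 0 T),
    intervalIntegral.integral_eq_sub_of_hasDerivAt (fun t _ => hasDerivAt_exp_smul_apply C x t)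
      ((C.continuous.comp (continuous_exp_smul_apply C x)).intervalIntegrable 0 T)]
  simp

theorem apply_exp_smul_apply_of_apply_eq_zero {F : Type*} [NormedAddCommGroup F]
    [NormedSpace ℂ F] {τ : E →L[ℂ] F} (hτ : ∀ y, τ (C y) = 0) (t : ℝ) :
    τ (exp (t • C) x) = τ x := by
  have hderiv (s : ℝ) : HasDerivAt (fun s : ℝ => τ (exp (s • C) x)) 0 s := by
    have h := (τ.restrictScalars ℝ).hasFDerivAt.comp_hasDerivAt s (hasDerivAt_exp_smul_apply C x s)
    rwa [ContinuousLinearMap.coe_restrictScalars', hτ] at h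
  simpa using is_const_of_deriv_eq_zero (fun s => (hderiv s).differentiableAt)
    (fun s => (hderiv s).deriv) t 0

theorem apply_eq_zero_of_tendsto_average {R : ℝ} (hR : ∀ t : ℝ, 0 ≤ t → ‖exp (t • C) x‖ ≤ R)
    {T : ℕ → ℝ} (hT : Tendsto T atTop atTop) {σ : E}
    (hσ : Tendsto (fun k => (T k)⁻¹ • ∫ t in (0 : ℝ)..T k, exp (t • C) x) atTop (𝓝 σ)) :
    C σ = 0 := by
  refine tendsto_nhds_unique ((C.continuous.tendsto σ).comp hσ) (squeeze_zero_norm' ?_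
    (by simpa using (hT.inv_tendsto_atTop).mul_const (R + ‖x‖)))
  filter_upwards [hT.eventually_ge_atTop 0] with k hk
  rw [Function.comp_apply, C.map_smul_of_tower, apply_intervalIntegral_exp_smul_apply, norm_smul,
    Real.norm_of_nonneg (inv_nonneg.2 hk)]
  gcongr
  exact (norm_sub_le _ _).trans (add_le_add_left (hR (T k) hk) _)

end Orbit

theorem Convex.inv_smul_intervalIntegral_mem {E : Type*} [NormedAddCommGroup E] [NormedSpace ℝ E]
    [CompleteSpace E] {K : Set E} (hK : Convex ℝ K) (hKc : IsClosed K) {f : ℝ → E} {T : ℝ}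
    (hT : 0 < T) (hf : IntervalIntegrable f volume 0 T) (hfK : ∀ t ∈ Set.Ioc 0 T, f t ∈ K) :
    T⁻¹ • ∫ t in (0 : ℝ)..T, f t ∈ K := by
  have h := hK.set_average_mem hKc (by simp [hT]) (by simp)
    ((ae_restrict_mem measurableSet_Ioc).mono hfK) hf.1
  rwa [← Set.uIoc_of_le hT.le, interval_average_eq, sub_zero] at h

section MatrixOperators

/-- `Matrix n n ℂ` finds the product topology first; putting the (equal) topology of the
`L∞`-operator norm in front lets `Matrix n n ℂ →L[ℂ] Matrix n n ℂ` carry its operator norm. -/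
noncomputable abbrev Matrix.linftyOpTopology [Fintype n] : TopologicalSpace (Matrix n n ℂ) :=
  (Matrix.linftyOpNormedAddCommGroup :
    NormedAddCommGroup (Matrix n n ℂ)).toUniformSpace.toTopologicalSpace

attribute [local instance] Matrix.linftyOpTopology Matrix.linftyOpNormedRing
  Matrix.linftyOpNormedAlgebra

section States

theorem Matrix.PosSemidef.norm_apply_sq_le {A : Matrix n n ℂ} (hA : A.PosSemidef) (i j : n) :
    ‖A i j‖ ^ 2 ≤ (A i i).re * (A j j).re := by
  -- the principal `2 × 2` minor on the rows `i, j` is nonnegative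
  have hdet := (Complex.nonneg_iff.1 (hA.submatrix ![i, j]).det_nonneg).1
  have hii := (Complex.nonneg_iff.1 (hA.diag_nonneg (i := i))).2
  simp only [det_fin_two, submatrix_apply, Matrix.cons_val_zero, Matrix.cons_val_one] at hdet
  rw [← hA.1.apply j i] at hdet
  simp only [Complex.star_def, Complex.mul_conj, Complex.sub_re, Complex.mul_re, ← hii,
    Complex.ofReal_re, Complex.normSq_eq_norm_sq] at hdet
  linarith

theorem Matrix.linfty_opNorm_le_card {m α : Type*} [Fintype m] [Fintype n]
    [NormedAddCommGroup α] {A : Matrix m n α} (h : ∀ i j, ‖A i j‖ ≤ 1) :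
    ‖A‖ ≤ Fintype.card n := by
  rw [linfty_opNorm_def]
  norm_cast
  refine Finset.sup_le fun i _ => ?_
  simpa using Finset.sum_le_card_nsmul Finset.univ _ 1
    fun j _ => (by exact_mod_cast h i j : ‖A i j‖₊ ≤ 1)

variable [Fintype n]

def states (n : Type*) [Fintype n] : Set (Matrix n n ℂ) := {ρ | ρ.PosSemidef ∧ ρ.trace = 1}

theorem isClosed_setOf_posSemidef : IsClosed {A : Matrix n n ℂ | A.PosSemidef} := by
  simp only [Matrix.posSemidef_iff_dotProduct_mulVec, Set.ofPred_and, Set.ofPred_forall]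
  refine (isClosed_eq ?_ continuous_id).inter
    (isClosed_iInter fun x => isClosed_le continuous_const ?_)
  · exact continuous_id.matrix_conjTranspose
  · exact continuous_const.dotProduct (continuous_id.matrix_mulVec continuous_const)

theorem isClosed_states : IsClosed (states n) :=
  isClosed_setOf_posSemidef.inter (isClosed_eq continuous_id.matrix_trace continuous_const)

theorem convex_states : Convex ℝ (states n) := by
  intro x hx y hy a b ha hb hab
  refine ⟨(hx.1.smul ha).add (hy.1.smul hb), ?_⟩
  rw [trace_add, trace_smul, trace_smul, hx.2, hy.2, ← add_smul, hab, one_smul]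

theorem norm_apply_le_one_of_mem_states {ρ : Matrix n n ℂ} (hρ : ρ ∈ states n) (i j : n) :
    ‖ρ i j‖ ≤ 1 := by
  have hdiag (k : n) : 0 ≤ (ρ k k).re ∧ (ρ k k).re ≤ 1 := by
    have hnonneg (l : n) : 0 ≤ (ρ l l).re := (Complex.nonneg_iff.1 hρ.1.diag_nonneg).1
    refine ⟨hnonneg k, ?_⟩
    calc (ρ k k).re ≤ ∑ l, (ρ l l).re :=
          Finset.single_le_sum (fun l _ => hnonneg l) (Finset.mem_univ k)
      _ = ρ.trace.re := (Complex.re_sum _ _).symm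
      _ = 1 := by rw [hρ.2, Complex.one_re]
  nlinarith [hρ.1.norm_apply_sq_le i j, hdiag i, hdiag j, norm_nonneg (ρ i j)]

end States

section Lindblad

variable [Fintype n]

def posSemidefPreserving (n : Type*) [Fintype n] :
    Submonoid (Matrix n n ℂ →L[ℂ] Matrix n n ℂ) where
  carrier := {Φ | ∀ ρ, ρ.PosSemidef → (Φ ρ).PosSemidef}
  mul_mem' hΦ hΨ ρ hρ := hΦ _ (hΨ ρ hρ)
  one_mem' _ hρ := hρ

theorem mem_posSemidefPreserving {Φ : Matrix n n ℂ →L[ℂ] Matrix n n ℂ} :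
    Φ ∈ posSemidefPreserving n ↔ ∀ ρ, ρ.PosSemidef → (Φ ρ).PosSemidef :=
  Iff.rfl

theorem isClosed_posSemidefPreserving :
    IsClosed (posSemidefPreserving n : Set (Matrix n n ℂ →L[ℂ] Matrix n n ℂ)) := by
  show IsClosed {Φ : Matrix n n ℂ →L[ℂ] Matrix n n ℂ | ∀ ρ, ρ.PosSemidef → (Φ ρ).PosSemidef}
  simp only [Set.ofPred_forall]
  exact isClosed_iInter fun ρ => isClosed_iInter fun _ =>
    isClosed_setOf_posSemidef.preimage (ContinuousLinearMap.apply ℂ (Matrix n n ℂ) ρ).continuous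

variable [DecidableEq n]

theorem exp_smul_mul_add_flip_mul_apply (G ρ : Matrix n n ℂ) (t : ℝ) :
    exp (t • (ContinuousLinearMap.mul ℂ _ G + (ContinuousLinearMap.mul ℂ _).flip Gᴴ)) ρ =
      exp (t • G) * ρ * (exp (t • G))ᴴ := by
  let _ : NormedAlgebra ℚ (Matrix n n ℂ →L[ℂ] Matrix n n ℂ) :=
    NormedAlgebra.restrictScalars ℚ ℂ _
  have hcomm : Commute (ContinuousLinearMap.mul ℂ _ (t • G))
      ((ContinuousLinearMap.mul ℂ _).flip (t • Gᴴ)) := by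
    ext1 ρ; simp [mul_assoc]
  rw [smul_add, ← ContinuousLinearMap.map_smul_of_tower, ← ContinuousLinearMap.map_smul_of_tower,
    NormedSpace.exp_add_of_commute hcomm, ContinuousLinearMap.exp_mul,
    ContinuousLinearMap.exp_flip_mul]
  have hG : t • Gᴴ = (t • G)ᴴ := by rw [conjTranspose_smul, star_trivial]
  have hexp : exp (t • G)ᴴ = (exp (t • G))ᴴ := Matrix.exp_conjTranspose _
  rw [hG, hexp]
  simp [mul_assoc]

noncomputable def lindbladDrift (H L : Matrix n n ℂ) : Matrix n n ℂ :=
  -Complex.I • H - (1 / 2 : ℂ) • (Lᴴ * L)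

noncomputable def schrodGenCLM (H L : Matrix n n ℂ) : Matrix n n ℂ →L[ℂ] Matrix n n ℂ :=
  (schrodGenLM H L).toContinuousLinearMap

theorem schrodGenCLM_eq {H : Matrix n n ℂ} (hH : H.IsHermitian) (L : Matrix n n ℂ) :
    schrodGenCLM H L =
      (ContinuousLinearMap.mul ℂ _ (lindbladDrift H L) +
          (ContinuousLinearMap.mul ℂ _).flip (lindbladDrift H L)ᴴ) +
        ContinuousLinearMap.mul ℂ _ L * (ContinuousLinearMap.mul ℂ _).flip Lᴴ := by
  ext1 ρ
  simp [schrodGenCLM, lindbladDrift, schrodGenLM_apply, conjTranspose_smul, hH.eq, mul_assoc]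
  module

theorem exp_smul_schrodGenCLM_mem [Nonempty n] {H : Matrix n n ℂ} (hH : H.IsHermitian)
    (L : Matrix n n ℂ) {t : ℝ} (ht : 0 ≤ t) :
    exp (t • schrodGenCLM H L) ∈ posSemidefPreserving n := by
  rw [schrodGenCLM_eq hH]
  refine exp_smul_add_mem_of_isClosed isClosed_posSemidefPreserving
    (fun s _ => mem_posSemidefPreserving.2 fun ρ hρ => ?_)
    (fun s hs => mem_posSemidefPreserving.2 fun ρ hρ => ?_) ht
  · rw [exp_smul_mul_add_flip_mul_apply]
    exact hρ.mul_mul_conjTranspose_same _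
  · have hB : ((ContinuousLinearMap.mul ℂ (Matrix n n ℂ) L *
        (ContinuousLinearMap.mul ℂ (Matrix n n ℂ)).flip Lᴴ) ρ).PosSemidef := by
      simpa [mul_assoc] using hρ.mul_mul_conjTranspose_same L
    rw [one_add_real_smul_apply]
    exact hρ.add (hB.smul (Complex.zero_le_real.2 hs))

theorem trace_schrodGenLM (H L ρ : Matrix n n ℂ) : (schrodGenLM H L ρ).trace = 0 := by
  rw [schrodGenLM_apply]
  simp only [trace_add, trace_sub, trace_smul]
  rw [trace_mul_comm ρ H, trace_mul_comm ρ (Lᴴ * L), trace_mul_comm (L * ρ) Lᴴ, ← mul_assoc]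
  ring

theorem traj_eq_exp_smul_apply (H L ρ₀ : Matrix n n ℂ) :
    traj H L ρ₀ = fun t => exp (t • schrodGenCLM H L) ρ₀ :=
  rfl

theorem traj_mem_states [Nonempty n] {H : Matrix n n ℂ} (hH : H.IsHermitian) (L : Matrix n n ℂ)
    {ρ₀ : Matrix n n ℂ} (hρ₀ : ρ₀ ∈ states n) {t : ℝ} (ht : 0 ≤ t) : traj H L ρ₀ t ∈ states n :=
  ⟨exp_smul_schrodGenCLM_mem hH L ht ρ₀ hρ₀.1,
    (apply_exp_smul_apply_of_apply_eq_zero _ ρ₀ (τ := (traceLinearMap n ℂ ℂ).toContinuousLinearMap)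
      (trace_schrodGenLM H L) t).trans hρ₀.2⟩

end Lindblad

end MatrixOperators

/-- any limit of Cesàro averages of a state trajectory is an invariant state. -/
theorem cesaro_limit_invariant
    [Fintype n] [DecidableEq n] [Nonempty n]
    (H L : Matrix n n ℂ) (hH : H.IsHermitian)
    (ρ₀ : Matrix n n ℂ) (hρ₀ : ρ₀.PosSemidef) (hρ₀tr : ρ₀.trace = 1)
    (T : ℕ → ℝ) (hT : ∀ k, 0 < T k)
    (hTtop : Filter.Tendsto T Filter.atTop Filter.atTop)
    (σ : Matrix n n ℂ)
    (hconv : Filter.Tendsto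
      (fun k => (T k)⁻¹ • ∫ t in (0 : ℝ)..(T k), traj H L ρ₀ t)
      Filter.atTop (nhds σ)) :
    σ.PosSemidef ∧ σ.trace = 1 ∧ schrodGenLM H L σ = 0 := by
  have hstate {t : ℝ} (ht : 0 ≤ t) : traj H L ρ₀ t ∈ states n :=
    traj_mem_states hH L ⟨hρ₀, hρ₀tr⟩ ht
  rw [traj_eq_exp_smul_apply] at hconv hstate
  have hσ : σ ∈ states n := isClosed_states.mem_of_tendsto hconv <| .of_forall fun k =>
    convex_states.inv_smul_intervalIntegral_mem isClosed_states (hT k)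
      ((continuous_exp_smul_apply _ ρ₀).intervalIntegrable _ _) fun t ht => hstate ht.1.le
  exact ⟨hσ.1, hσ.2, apply_eq_zero_of_tendsto_average (schrodGenCLM H L) ρ₀ (R := Fintype.card n)
    (fun t ht => Matrix.linfty_opNorm_le_card (norm_apply_le_one_of_mem_states (hstate ht)))
    hTtop hconv⟩
end
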